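/- Let Y ~ χ²(n) (chi-squared with n degrees of freedom). Then for every x > 0, P(Y ≤ n − 2√(nx)) ≤ exp(−x). -/

import Mathlib

open MeasureTheory Real Set ProbabilityTheory

/-!
Chernoff's method: on `Y ≤ b`, the `Gamma(a, r)` density is at most `e^{tb} (r/(r+t))^a` times
the `Gamma(a, r + t)` density, so `P(Y ≤ b) ≤ e^{tb} (r/(r+t))^a` for every `t ≥ 0`. Writing
`b = (a/r)(1 - u)` and choosing `r/(r+t) = 1 - u`, the bound becomes `e^{au} (1 - u)^a`, and
`log (1 - u) ≤ -u - u²/2` turns it into `e^{-a u²/2}`. For `χ²(n)` we have `a = n/2`, `r = 1/2`,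
and `u = 2 √(x/n)` gives `a u²/2 = x`.
-/

lemma one_sub_le_exp_neg_sub_sq_div_two {u : ℝ} (hu : 0 ≤ u) :
    1 - u ≤ exp (-u - u ^ 2 / 2) := by
  rcases le_or_gt 1 u with h1 | h1
  · exact (sub_nonpos.mpr h1).trans (exp_pos _).le
  have hlog : log (1 - u) ≤ -u - u ^ 2 / 2 := by
    have hsum := hasSum_pow_div_log_of_abs_lt_one (abs_lt.mpr ⟨by linarith, h1⟩)
    have := sum_le_hasSum (Finset.range 2) (fun k _ => by positivity) hsum
    norm_num [Finset.sum_range_succ] at this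
    linarith
  calc 1 - u = exp (log (1 - u)) := (exp_log (by linarith)).symm
    _ ≤ exp (-u - u ^ 2 / 2) := exp_le_exp.mpr hlog

lemma gammaPDF_le_mul_gammaPDF_add {a r t b y : ℝ} (ha : 0 < a) (hr : 0 < r) (ht : 0 ≤ t)
    (hy : y ≤ b) :
    gammaPDF a r y ≤ ENNReal.ofReal (exp (t * b) * (r / (r + t)) ^ a) * gammaPDF a (r + t) y := by
  rcases lt_or_ge y 0 with hy0 | hy0
  · simp [gammaPDF_of_neg hy0]
  have hrt : 0 < r + t := by linarith
  rw [gammaPDF_of_nonneg hy0, gammaPDF_of_nonneg hy0, ← ENNReal.ofReal_mul (by positivity)]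
  refine ENNReal.ofReal_le_ofReal ?_
  have hrpow : (r / (r + t)) ^ a * (r + t) ^ a = r ^ a := by
    rw [div_rpow hr.le hrt.le, div_mul_cancel₀ _ (rpow_pos_of_pos hrt a).ne']
  have hexp : exp (-(r * y)) ≤ exp (t * b) * exp (-((r + t) * y)) := by
    rw [← exp_add, exp_le_exp]
    nlinarith
  have hΓ := Gamma_pos_of_pos ha
  calc r ^ a / Gamma a * y ^ (a - 1) * exp (-(r * y))
      ≤ r ^ a / Gamma a * y ^ (a - 1) * (exp (t * b) * exp (-((r + t) * y))) := by gcongr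
    _ = exp (t * b) * (r / (r + t)) ^ a *
          ((r + t) ^ a / Gamma a * y ^ (a - 1) * exp (-((r + t) * y))) := by
      rw [← hrpow]; ring

lemma gammaMeasure_Iic_le {a r t b : ℝ} (ha : 0 < a) (hr : 0 < r) (ht : 0 ≤ t) :
    gammaMeasure a r (Iic b) ≤ ENNReal.ofReal (exp (t * b) * (r / (r + t)) ^ a) := by
  set c := ENNReal.ofReal (exp (t * b) * (r / (r + t)) ^ a)
  calc gammaMeasure a r (Iic b)
      = ∫⁻ y in Iic b, gammaPDF a r y := withDensity_apply _ measurableSet_Iic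
    _ ≤ ∫⁻ y in Iic b, c * gammaPDF a (r + t) y :=
      setLIntegral_mono' measurableSet_Iic fun y hy => gammaPDF_le_mul_gammaPDF_add ha hr ht hy
    _ ≤ ∫⁻ y, c * gammaPDF a (r + t) y := setLIntegral_le_lintegral _ _
    _ = c := by
      have hmeas : Measurable (gammaPDF a (r + t)) :=
        (measurable_gammaPDFReal a (r + t)).ennreal_ofReal
      rw [lintegral_const_mul c hmeas, lintegral_gammaPDF_eq_one ha (by linarith), mul_one]

lemma gammaMeasure_Iic_of_nonpos {a r b : ℝ} (hb : b ≤ 0) : gammaMeasure a r (Iic b) = 0 := by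
  rw [gammaMeasure, withDensity_apply _ measurableSet_Iic,
    ← setLIntegral_congr (Iio_ae_eq_Iic (a := b))]
  exact lintegral_gammaPDF_of_nonpos hb

lemma gammaMeasure_Iic_mul_one_sub_le {a r u : ℝ} (ha : 0 < a) (hr : 0 < r) (hu : 0 ≤ u) :
    gammaMeasure a r (Iic (a / r * (1 - u))) ≤ ENNReal.ofReal (exp (-(a * u ^ 2 / 2))) := by
  rcases le_or_gt 1 u with hu1 | hu1
  · rw [gammaMeasure_Iic_of_nonpos (mul_nonpos_of_nonneg_of_nonpos (by positivity) (by linarith))]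
    exact zero_le
  have h1u : 0 < 1 - u := by linarith
  refine (gammaMeasure_Iic_le ha hr (t := r * u / (1 - u)) (by positivity)).trans ?_
  refine ENNReal.ofReal_le_ofReal ?_
  have htb : r * u / (1 - u) * (a / r * (1 - u)) = a * u := by field_simp
  have hratio : r / (r + r * u / (1 - u)) = 1 - u := by field_simp; ring
  rw [htb, hratio]
  calc exp (a * u) * (1 - u) ^ a ≤ exp (a * u) * exp (-u - u ^ 2 / 2) ^ a := by
        gcongr; exact one_sub_le_exp_neg_sub_sq_div_two hu
    _ = exp (-(a * u ^ 2 / 2)) := by rw [← exp_mul, ← exp_add]; ring_nf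

/-- Chi-squared lower tail bound (Laurent–Massart): if `Y ~ χ²(n)`, i.e. `Y` has the gamma
distribution with shape `n/2` and rate `1/2`, then for every `x > 0`,
`P(Y ≤ n - 2√(nx)) ≤ exp(-x)`. -/
theorem chi_squared_lower_tail (n : ℕ) (hn : 1 ≤ n) (x : ℝ) (hx : 0 < x) :
    gammaMeasure ((n : ℝ) / 2) (1 / 2)
        (Set.Iic ((n : ℝ) - 2 * Real.sqrt ((n : ℝ) * x))) ≤
      ENNReal.ofReal (Real.exp (-x)) := by
  have hn₀ : (0 : ℝ) < n := by exact_mod_cast hn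
  set u := 2 * √x / √n
  have hthreshold : (n : ℝ) - 2 * √(n * x) = n / 2 / (1 / 2) * (1 - u) := by
    rw [sqrt_mul hn₀.le]
    simp only [u]
    field_simp
    linear_combination (-2 * √x) * mul_self_sqrt hn₀.le
  have hexponent : n / 2 * u ^ 2 / 2 = x := by
    simp only [u, div_pow, mul_pow, sq_sqrt hx.le, sq_sqrt hn₀.le]
    field_simp
  rw [hthreshold, ← hexponent]
  exact gammaMeasure_Iic_mul_one_sub_le (by positivity) one_half_pos (by positivity)
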